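/- Let ρ and σ be positive definite d×d density matrices, let λ_ρ be the largest eigenvalue of ρ, and let α = min{α_ρ, α_σ} where α_ρ and α_σ are the smallest eigenvalues of ρ and σ respectively. Then the Umegaki relative entropy satisfies S(ρ‖σ) ≤ ‖ρ−σ‖₁ · λ_ρ / α. -/

import Mathlib

open Matrix ComplexOrder

/-- The trace norm of a complex matrix: the sum of its singular values,
realized as `Tr √(Aᴴ A)`. -/
noncomputable def traceNorm {d : ℕ} (A : Matrix (Fin d) (Fin d) ℂ) : ℝ :=
  (((Matrix.posSemidef_conjTranspose_mul_self A).1.eigenvectorUnitary.1 *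
    diagonal (((↑) : ℝ → ℂ) ∘ (√·) ∘ (Matrix.posSemidef_conjTranspose_mul_self A).1.eigenvalues) *
    (star (Matrix.posSemidef_conjTranspose_mul_self A).1.eigenvectorUnitary :
      Matrix (Fin d) (Fin d) ℂ)).trace).re

/-- Functional calculus for a Hermitian matrix: apply `f` to the eigenvalues in an
orthonormal eigenbasis. -/
noncomputable def matFun {d : ℕ} {A : Matrix (Fin d) (Fin d) ℂ} (hA : A.IsHermitian)
    (f : ℝ → ℝ) : Matrix (Fin d) (Fin d) ℂ :=
  (hA.eigenvectorUnitary : Matrix (Fin d) (Fin d) ℂ) *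
    Matrix.diagonal (fun i => (f (hA.eigenvalues i) : ℂ)) *
    (star hA.eigenvectorUnitary : Matrix (Fin d) (Fin d) ℂ)

/-- `f : (0,∞) → ℝ` is operator monotone decreasing: for all positive definite matrices
`A ≤ B` (Loewner order) of any size, `f(B) ≤ f(A)`. -/
def OpMonoDecrOn (f : ℝ → ℝ) : Prop :=
  ∀ (n : ℕ) (A B : Matrix (Fin n) (Fin n) ℂ) (hA : A.PosDef) (hB : B.PosDef),
    (B - A).PosSemidef → (matFun hA.1 f - matFun hB.1 f).PosSemidef

/-- The quasi-relative entropy `S_f(ρ‖σ) = Σ_{j,k} λ_j f(μ_k/λ_j) |⟨φ_k|ψ_j⟩|²` computed from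
spectral decompositions `ρ = Σ_j λ_j |ψ_j⟩⟨ψ_j|`, `σ = Σ_k μ_k |φ_k⟩⟨φ_k|`. -/
noncomputable def quasiRelEntropy {d : ℕ} (f : ℝ → ℝ) {ρ σ : Matrix (Fin d) (Fin d) ℂ}
    (hρ : ρ.IsHermitian) (hσ : σ.IsHermitian) : ℝ :=
  ∑ j, ∑ k, hρ.eigenvalues j * f (hσ.eigenvalues k / hρ.eigenvalues j) *
    ‖(inner ℂ (hσ.eigenvectorBasis k) (hρ.eigenvectorBasis j) : ℂ)‖ ^ 2

/-- The Umegaki relative entropy `S(ρ‖σ) = Tr(ρ (log ρ − log σ))`. -/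
noncomputable def relEntropy {d : ℕ} {ρ σ : Matrix (Fin d) (Fin d) ℂ}
    (hρ : ρ.IsHermitian) (hσ : σ.IsHermitian) : ℝ :=
  ((ρ * (matFun hρ Real.log - matFun hσ Real.log)).trace).re

/-- The Tsallis relative q-entropy `S_q(ρ‖σ) = (1/(1−q))(1 − Tr(ρ^q σ^{1−q}))`. -/
noncomputable def tsallisEntropy {d : ℕ} (q : ℝ) {ρ σ : Matrix (Fin d) (Fin d) ℂ}
    (hρ : ρ.IsHermitian) (hσ : σ.IsHermitian) : ℝ :=
  (1 / (1 - q)) *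
    (1 - ((matFun hρ (fun x => x ^ q) * matFun hσ (fun x => x ^ (1 - q))).trace).re)

/-!
The integral representation `log x - log y = ∫₀^∞ (x - y) / ((t + x)(t + y)) dt`, applied in the
eigenbases of `ρ` and `σ`, gives `S(ρ‖σ) = ∫₀^∞ Tr(ρ(t + ρ)⁻¹ (ρ - σ) (t + σ)⁻¹) dt`. By Hölder's
inequality each integrand is at most `‖ρ - σ‖₁ ‖ρ(t + ρ)⁻¹‖ ‖(t + σ)⁻¹‖ ≤ ‖ρ - σ‖₁ λ_ρ / (t + α)²`
in operator norm, and `∫₀^∞ (t + α)⁻² dt = 1 / α`.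
-/

open scoped Matrix.Norms.L2Operator

section Spectral

variable {d : ℕ}

lemma matFun_eq_cfc {A : Matrix (Fin d) (Fin d) ℂ} (hA : A.IsHermitian) (f : ℝ → ℝ) :
    matFun hA f = cfc f A := by
  rw [hA.cfc_eq]
  rfl

lemma Matrix.IsHermitian.trace_cfc {A : Matrix (Fin d) (Fin d) ℂ} (hA : A.IsHermitian)
    (f : ℝ → ℝ) : (cfc f A).trace = ∑ i, (f (hA.eigenvalues i) : ℂ) := by
  rw [hA.cfc_eq, IsHermitian.cfc, Unitary.conjStarAlgAut_apply, trace_mul_cycle,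
    Unitary.coe_star_mul_self, one_mul, trace_diagonal]
  rfl

lemma traceNorm_eq_sum_abs_eigenvalues {A : Matrix (Fin d) (Fin d) ℂ} (hA : A.IsHermitian) :
    traceNorm A = ∑ i, |hA.eigenvalues i| := by
  have hsqrt : cfc Real.sqrt (Aᴴ * A) = cfc (fun x : ℝ => |x|) A := by
    simp_rw [← Real.sqrt_sq_eq_abs]
    rw [cfc_comp_pow Real.sqrt 2 A, hA.eq, sq]
  have h : traceNorm A = (cfc Real.sqrt (Aᴴ * A)).trace.re := by
    rw [(posSemidef_conjTranspose_mul_self A).1.cfc_eq]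
    rfl
  rw [h, hsqrt, hA.trace_cfc, ← Complex.ofReal_sum, Complex.ofReal_re]

lemma Matrix.norm_apply_le_l2_opNorm (N : Matrix (Fin d) (Fin d) ℂ) (i j : Fin d) :
    ‖N i j‖ ≤ ‖N‖ := by
  have h := N.l2_opNorm_mulVec (EuclideanSpace.single j 1)
  rw [PiLp.norm_single, norm_one, mul_one] at h
  refine le_trans ?_ (le_trans (PiLp.norm_apply_le _ i) h)
  simp [mulVec_single]

lemma norm_trace_mul_le_traceNorm_mul_norm {A : Matrix (Fin d) (Fin d) ℂ} (hA : A.IsHermitian)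
    (M : Matrix (Fin d) (Fin d) ℂ) : ‖(A * M).trace‖ ≤ traceNorm A * ‖M‖ := by
  set W := hA.eigenvectorUnitary
  set N := (star W : Matrix (Fin d) (Fin d) ℂ) * M * W
  have hN : ‖N‖ = ‖M‖ := by
    rw [CStarRing.norm_mul_coe_unitary, ← Unitary.coe_star, CStarRing.norm_coe_unitary_mul]
  have htrace : (A * M).trace = ∑ i, (hA.eigenvalues i : ℂ) * N i i := by
    conv_lhs => rw [hA.spectral_theorem, Unitary.conjStarAlgAut_apply, Matrix.mul_assoc,
      Matrix.mul_assoc, trace_mul_comm, Matrix.mul_assoc]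
    simp only [trace, diag_apply, diagonal_mul, Function.comp_apply]
    rfl
  rw [htrace, traceNorm_eq_sum_abs_eigenvalues hA, Finset.sum_mul]
  refine (norm_sum_le _ _).trans (Finset.sum_le_sum fun i _ => ?_)
  rw [norm_mul, Complex.norm_real, Real.norm_eq_abs, ← hN]
  exact mul_le_mul_of_nonneg_left (N.norm_apply_le_l2_opNorm i i) (abs_nonneg _)

lemma Matrix.IsHermitian.norm_cfc_le {A : Matrix (Fin d) (Fin d) ℂ} (hA : A.IsHermitian)
    {f : ℝ → ℝ} {c : ℝ} (hc : 0 ≤ c) (hf : ∀ i, |f (hA.eigenvalues i)| ≤ c) :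
    ‖cfc f A‖ ≤ c := by
  refine _root_.norm_cfc_le hc ?_
  rw [hA.spectrum_real_eq_range_eigenvalues]
  rintro _ ⟨i, rfl⟩
  exact hf i

/-- `|⟨ψ_j, φ_k⟩|²` for the eigenbases `ψ` of `A` and `φ` of `B`. -/
noncomputable def eigenOverlap {A B : Matrix (Fin d) (Fin d) ℂ} (hA : A.IsHermitian)
    (hB : B.IsHermitian) (j k : Fin d) : ℝ :=
  ‖(star (hA.eigenvectorUnitary : Matrix (Fin d) (Fin d) ℂ) * hB.eigenvectorUnitary) j k‖ ^ 2

lemma trace_diagonal_mul_mul_diagonal_mul_star (X : Matrix (Fin d) (Fin d) ℂ)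
    (a b : Fin d → ℂ) :
    (diagonal a * X * diagonal b * star X).trace = ∑ j, ∑ k, a j * b k * (‖X j k‖ ^ 2 : ℝ) := by
  have h : diagonal a * X * diagonal b = of fun j k => a j * X j k * b k := by
    ext j k
    rw [mul_diagonal, diagonal_mul, of_apply]
  simp only [h, trace, diag_apply, mul_apply, of_apply, star_apply]
  refine Finset.sum_congr rfl fun j _ => Finset.sum_congr rfl fun k _ => ?_
  rw [Complex.ofReal_pow, ← Complex.mul_conj', ← Complex.star_def]
  ring

lemma trace_cfc_mul_cfc {A B : Matrix (Fin d) (Fin d) ℂ} (hA : A.IsHermitian)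
    (hB : B.IsHermitian) (f g : ℝ → ℝ) :
    (cfc f A * cfc g B).trace = ((∑ j, ∑ k,
      f (hA.eigenvalues j) * g (hB.eigenvalues k) * eigenOverlap hA hB j k : ℝ) : ℂ) := by
  set U := (hA.eigenvectorUnitary : Matrix (Fin d) (Fin d) ℂ)
  set V := (hB.eigenvectorUnitary : Matrix (Fin d) (Fin d) ℂ)
  have hcycle : (cfc f A * cfc g B).trace =
      (diagonal (RCLike.ofReal ∘ f ∘ hA.eigenvalues) * (star U * V) *
        diagonal (RCLike.ofReal ∘ g ∘ hB.eigenvalues) * star (star U * V)).trace := by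
    rw [hA.cfc_eq, hB.cfc_eq, IsHermitian.cfc, IsHermitian.cfc, Unitary.conjStarAlgAut_apply,
      Unitary.conjStarAlgAut_apply, star_mul, star_star]
    simp only [Matrix.mul_assoc]
    rw [trace_mul_comm]
    simp only [Matrix.mul_assoc]
    rfl
  rw [hcycle, trace_diagonal_mul_mul_diagonal_mul_star]
  push_cast [eigenOverlap]
  rfl

lemma trace_cfc_mul_sub_mul_cfc {A B : Matrix (Fin d) (Fin d) ℂ} (hA : A.IsHermitian)
    (hB : B.IsHermitian) (f g : ℝ → ℝ) :
    (cfc f A * (A - B) * cfc g B).trace = ((∑ j, ∑ k,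
      f (hA.eigenvalues j) * g (hB.eigenvalues k) * (hA.eigenvalues j - hB.eigenvalues k) *
        eigenOverlap hA hB j k : ℝ) : ℂ) := by
  have hfA : cfc f A * A = cfc (fun x => f x * x) A := by
    rw [cfc_mul f (fun x => x) A (A.finite_real_spectrum.continuousOn _)
      (A.finite_real_spectrum.continuousOn _), cfc_id' ℝ A hA.isSelfAdjoint]
  have hBg : B * cfc g B = cfc (fun x => x * g x) B := by
    rw [cfc_mul (fun x => x) g B (B.finite_real_spectrum.continuousOn _)
      (B.finite_real_spectrum.continuousOn _), cfc_id' ℝ B hB.isSelfAdjoint]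
  rw [Matrix.mul_sub, Matrix.sub_mul, trace_sub, hfA, Matrix.mul_assoc, hBg,
    trace_cfc_mul_cfc hA hB, trace_cfc_mul_cfc hA hB, ← Complex.ofReal_sub]
  simp only [← Finset.sum_sub_distrib]
  congr 1
  refine Finset.sum_congr rfl fun j _ => Finset.sum_congr rfl fun k _ => ?_
  ring

lemma relEntropy_eq_sum {ρ σ : Matrix (Fin d) (Fin d) ℂ} (hρ : ρ.IsHermitian)
    (hσ : σ.IsHermitian) :
    relEntropy hρ hσ = ∑ j, ∑ k, hρ.eigenvalues j *
      (Real.log (hρ.eigenvalues j) - Real.log (hσ.eigenvalues k)) * eigenOverlap hρ hσ j k := by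
  -- writing `ρ log ρ` as `(ρ log ρ) · 1(σ)` puts both traces on the same overlap weights
  have hlog : ρ * cfc Real.log ρ =
      cfc (fun x => x * Real.log x) ρ * cfc (fun _ : ℝ => (1 : ℝ)) σ := by
    rw [cfc_const_one ℝ σ hσ.isSelfAdjoint, Matrix.mul_one, cfc_mul (fun x => x) Real.log ρ
      (ρ.finite_real_spectrum.continuousOn _) (ρ.finite_real_spectrum.continuousOn _),
      cfc_id' ℝ ρ hρ.isSelfAdjoint]
  have hcross : ρ * cfc Real.log σ = cfc (fun x : ℝ => x) ρ * cfc Real.log σ := by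
    rw [cfc_id' ℝ ρ hρ.isSelfAdjoint]
  rw [relEntropy, matFun_eq_cfc, matFun_eq_cfc, Matrix.mul_sub, trace_sub, hlog, hcross,
    trace_cfc_mul_cfc hρ hσ, trace_cfc_mul_cfc hρ hσ, ← Complex.ofReal_sub, Complex.ofReal_re]
  simp only [← Finset.sum_sub_distrib]
  refine Finset.sum_congr rfl fun j _ => Finset.sum_congr rfl fun k _ => ?_
  ring

end Spectral

section Integral

open MeasureTheory Set Filter

lemma hasDerivAt_neg_inv_add {a t : ℝ} (h : t + a ≠ 0) :
    HasDerivAt (fun s => -(s + a)⁻¹) ((t + a) ^ 2)⁻¹ t := by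
  have hinv : HasDerivAt (fun s => -(s + a)⁻¹) (-(-1 / (t + a) ^ 2)) t :=
    (((hasDerivAt_id t).add_const a).inv h).neg
  exact hinv.congr_deriv (by ring)

lemma tendsto_neg_inv_add_atTop (a : ℝ) : Tendsto (fun s : ℝ => -(s + a)⁻¹) atTop (nhds 0) := by
  simpa using (tendsto_inv_atTop_zero.comp (tendsto_atTop_add_const_right _ a tendsto_id)).neg

lemma integrableOn_Ioi_inv_add_sq {a : ℝ} (ha : 0 < a) :
    IntegrableOn (fun t : ℝ => ((t + a) ^ 2)⁻¹) (Ioi 0) :=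
  integrableOn_Ioi_deriv_of_nonneg'
    (fun _ ht => hasDerivAt_neg_inv_add (add_pos_of_nonneg_of_pos ht ha).ne')
    (fun _ _ => by positivity) (tendsto_neg_inv_add_atTop a)

lemma integral_Ioi_inv_add_sq {a : ℝ} (ha : 0 < a) :
    ∫ t in Ioi (0 : ℝ), ((t + a) ^ 2)⁻¹ = a⁻¹ := by
  rw [integral_Ioi_of_hasDerivAt_of_nonneg'
    (fun _ ht => hasDerivAt_neg_inv_add (add_pos_of_nonneg_of_pos ht ha).ne')
    (fun _ _ => by positivity) (tendsto_neg_inv_add_atTop a)]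
  simp

lemma hasDerivAt_log_add_sub_log_add {x y t : ℝ} (hx : t + x ≠ 0) (hy : t + y ≠ 0) :
    HasDerivAt (fun s => Real.log (s + y) - Real.log (s + x))
      ((x - y) / ((t + x) * (t + y))) t := by
  have h : HasDerivAt (fun s => Real.log (s + y) - Real.log (s + x))
      (1 / (t + y) - 1 / (t + x)) t :=
    (((hasDerivAt_id t).add_const y).log hy).sub (((hasDerivAt_id t).add_const x).log hx)
  convert h using 1
  field_simp
  ring

lemma tendsto_log_add_sub_log_add (x y : ℝ) :
    Tendsto (fun t => Real.log (t + y) - Real.log (t + x)) atTop (nhds 0) := by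
  have h := (Real.tendsto_log_comp_add_sub_log y).sub (Real.tendsto_log_comp_add_sub_log x)
  rw [sub_zero] at h
  exact h.congr fun t => by ring

lemma integrableOn_Ioi_sub_div_mul {x y : ℝ} (hx : 0 < x) (hy : 0 < y) :
    IntegrableOn (fun t : ℝ => (x - y) / ((t + x) * (t + y))) (Ioi 0) := by
  have hderiv (t : ℝ) (ht : t ∈ Ici 0) :=
    hasDerivAt_log_add_sub_log_add (add_pos_of_nonneg_of_pos ht hx).ne'
      (add_pos_of_nonneg_of_pos ht hy).ne'
  have hden (t : ℝ) (ht : t ∈ Ioi 0) : 0 ≤ (t + x) * (t + y) := by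
    have : (0 : ℝ) < t := ht
    positivity
  rcases le_total y x with hyx | hxy
  · exact integrableOn_Ioi_deriv_of_nonneg' hderiv
      (fun t ht => div_nonneg (by linarith) (hden t ht)) (tendsto_log_add_sub_log_add x y)
  · exact integrableOn_Ioi_deriv_of_nonpos' hderiv
      (fun t ht => div_nonpos_of_nonpos_of_nonneg (by linarith) (hden t ht))
      (tendsto_log_add_sub_log_add x y)

lemma integral_Ioi_sub_div_mul {x y : ℝ} (hx : 0 < x) (hy : 0 < y) :
    ∫ t in Ioi (0 : ℝ), (x - y) / ((t + x) * (t + y)) = Real.log x - Real.log y := by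
  rw [integral_Ioi_of_hasDerivAt_of_tendsto'
    (fun t ht => hasDerivAt_log_add_sub_log_add (add_pos_of_nonneg_of_pos ht hx).ne'
      (add_pos_of_nonneg_of_pos ht hy).ne')
    (integrableOn_Ioi_sub_div_mul hx hy) (tendsto_log_add_sub_log_add x y)]
  simp

variable {d : ℕ}

/-- The integrand of `S(ρ‖σ) = ∫₀^∞ Tr(ρ (t + ρ)⁻¹ (ρ - σ) (t + σ)⁻¹) dt`. -/
noncomputable def relEntropyIntegrand (ρ σ : Matrix (Fin d) (Fin d) ℂ) (t : ℝ) : ℝ :=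
  ((cfc (fun x => x / (t + x)) ρ * (ρ - σ) * cfc (fun x => (t + x)⁻¹) σ).trace).re

lemma relEntropyIntegrand_eq_sum {ρ σ : Matrix (Fin d) (Fin d) ℂ} (hρ : ρ.IsHermitian)
    (hσ : σ.IsHermitian) (t : ℝ) :
    relEntropyIntegrand ρ σ t = ∑ j, ∑ k, hρ.eigenvalues j * eigenOverlap hρ hσ j k *
      ((hρ.eigenvalues j - hσ.eigenvalues k) /
        ((t + hρ.eigenvalues j) * (t + hσ.eigenvalues k))) := by
  rw [relEntropyIntegrand, trace_cfc_mul_sub_mul_cfc hρ hσ, Complex.ofReal_re]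
  refine Finset.sum_congr rfl fun j _ => Finset.sum_congr rfl fun k _ => ?_
  rw [div_eq_mul_inv, div_eq_mul_inv, mul_inv]
  ring

lemma integrableOn_relEntropyIntegrand {ρ σ : Matrix (Fin d) (Fin d) ℂ} (hρ : ρ.PosDef)
    (hσ : σ.PosDef) : IntegrableOn (relEntropyIntegrand ρ σ) (Ioi 0) := by
  simp_rw [funext (relEntropyIntegrand_eq_sum hρ.1 hσ.1)]
  exact integrable_finsetSum _ fun j _ => integrable_finsetSum _ fun k _ =>
    (integrableOn_Ioi_sub_div_mul (hρ.eigenvalues_pos j) (hσ.eigenvalues_pos k)).const_mul _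

lemma integral_relEntropyIntegrand {ρ σ : Matrix (Fin d) (Fin d) ℂ} (hρ : ρ.PosDef)
    (hσ : σ.PosDef) : ∫ t in Ioi 0, relEntropyIntegrand ρ σ t = relEntropy hρ.1 hσ.1 := by
  have hint := fun j k => (integrableOn_Ioi_sub_div_mul (hρ.eigenvalues_pos j)
    (hσ.eigenvalues_pos k)).const_mul (hρ.1.eigenvalues j * eigenOverlap hρ.1 hσ.1 j k)
  simp_rw [relEntropyIntegrand_eq_sum hρ.1 hσ.1]
  rw [integral_finsetSum _ fun j _ => integrable_finsetSum _ fun k _ => hint j k,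
    relEntropy_eq_sum]
  refine Finset.sum_congr rfl fun j _ => ?_
  rw [integral_finsetSum _ fun k _ => hint j k]
  refine Finset.sum_congr rfl fun k _ => ?_
  rw [integral_const_mul, integral_Ioi_sub_div_mul (hρ.eigenvalues_pos j) (hσ.eigenvalues_pos k)]
  ring

lemma relEntropyIntegrand_le {ρ σ : Matrix (Fin d) (Fin d) ℂ} (hρ : ρ.IsHermitian)
    (hσ : σ.IsHermitian) {t α L : ℝ} (ht : 0 ≤ t) (hα : 0 < α)
    (hαρ : ∀ j, α ≤ hρ.eigenvalues j) (hρL : ∀ j, hρ.eigenvalues j ≤ L)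
    (hL : 0 ≤ L) (hασ : ∀ k, α ≤ hσ.eigenvalues k) :
    relEntropyIntegrand ρ σ t ≤ traceNorm (ρ - σ) * L * ((t + α) ^ 2)⁻¹ := by
  set A := cfc (fun x => x / (t + x)) ρ
  set B := cfc (fun x => (t + x)⁻¹) σ
  have hA : ‖A‖ ≤ L / (t + α) := by
    refine hρ.norm_cfc_le (by positivity) fun j => ?_
    have hjα := hαρ j
    have hjL := hρL j
    rw [abs_of_nonneg (div_nonneg (by linarith) (by linarith)),
      div_le_div_iff₀ (by linarith) (by linarith)]
    nlinarith
  have hB : ‖B‖ ≤ (t + α)⁻¹ := by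
    refine hσ.norm_cfc_le (by positivity) fun k => ?_
    have hμα := hασ k
    rw [abs_of_pos (inv_pos.2 (by linarith))]
    exact inv_anti₀ (by positivity) (by linarith)
  have hΔ : 0 ≤ traceNorm (ρ - σ) := by
    rw [traceNorm_eq_sum_abs_eigenvalues (hρ.sub hσ)]
    positivity
  calc relEntropyIntegrand ρ σ t = ((ρ - σ) * (B * A)).trace.re := by
        rw [relEntropyIntegrand, trace_mul_cycle, trace_mul_comm]
    _ ≤ ‖((ρ - σ) * (B * A)).trace‖ := Complex.re_le_norm _
    _ ≤ traceNorm (ρ - σ) * ‖B * A‖ := norm_trace_mul_le_traceNorm_mul_norm (hρ.sub hσ) _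
    _ ≤ traceNorm (ρ - σ) * ((t + α)⁻¹ * (L / (t + α))) := by
        gcongr
        exact (norm_mul_le _ _).trans (mul_le_mul hB hA (norm_nonneg _) (by positivity))
    _ = traceNorm (ρ - σ) * L * ((t + α) ^ 2)⁻¹ := by
        rw [div_eq_mul_inv, sq, mul_inv]
        ring

end Integral

theorem relEntropy_le_div_min_general (d : ℕ)
    (ρ σ : Matrix (Fin d) (Fin d) ℂ) (hρ : ρ.PosDef) (hσ : σ.PosDef)
    (lρ aρ aσ : ℝ)
    (hl : IsGreatest (Set.range hρ.1.eigenvalues) lρ)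
    (haρ : IsLeast (Set.range hρ.1.eigenvalues) aρ)
    (haσ : IsLeast (Set.range hσ.1.eigenvalues) aσ) :
    relEntropy hρ.1 hσ.1 ≤ traceNorm (ρ - σ) * lρ / min aρ aσ := by
  have hαρ : ∀ j, min aρ aσ ≤ hρ.1.eigenvalues j :=
    fun j => (min_le_left _ _).trans (haρ.2 ⟨j, rfl⟩)
  have hασ : ∀ k, min aρ aσ ≤ hσ.1.eigenvalues k :=
    fun k => (min_le_right _ _).trans (haσ.2 ⟨k, rfl⟩)
  have hα : 0 < min aρ aσ := by
    obtain ⟨j, hj⟩ := haρ.1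
    obtain ⟨k, hk⟩ := haσ.1
    exact lt_min (hj ▸ hρ.eigenvalues_pos j) (hk ▸ hσ.eigenvalues_pos k)
  have hL : 0 ≤ lρ := by
    obtain ⟨j, hj⟩ := hl.1
    exact hj ▸ (hρ.eigenvalues_pos j).le
  rw [← integral_relEntropyIntegrand hρ hσ, div_eq_mul_inv, ← integral_Ioi_inv_add_sq hα,
    ← MeasureTheory.integral_const_mul]
  exact MeasureTheory.setIntegral_mono_on (integrableOn_relEntropyIntegrand hρ hσ)
    ((integrableOn_Ioi_inv_add_sq hα).const_mul _) measurableSet_Ioi fun t ht =>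
    relEntropyIntegrand_le hρ.1 hσ.1 (le_of_lt ht) hα hαρ (fun j => hl.2 ⟨j, rfl⟩) hL hασ

/-- upper continuity bound on the Umegaki relative entropy in terms of the
smallest eigenvalues. -/
theorem relEntropy_le_div_min (d : ℕ)
    (ρ σ : Matrix (Fin d) (Fin d) ℂ) (hρ : ρ.PosDef) (hσ : σ.PosDef)
    (hρtr : ρ.trace = 1) (hσtr : σ.trace = 1)
    (lρ aρ aσ : ℝ)
    (hl : IsGreatest (Set.range hρ.1.eigenvalues) lρ)
    (haρ : IsLeast (Set.range hρ.1.eigenvalues) aρ)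
    (haσ : IsLeast (Set.range hσ.1.eigenvalues) aσ) :
    relEntropy hρ.1 hσ.1 ≤ traceNorm (ρ - σ) * lρ / min aρ aσ :=
  relEntropy_le_div_min_general d ρ σ hρ hσ lρ aρ aσ hl haρ haσ
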